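/- arXiv:2601.16745 — 5 statements merged into one kernel-verified Lean document; each statement's English description precedes it below -/
import Mathlib

section
/- Let 𝓗 be a complex Hilbert space, H a bounded self-adjoint operator on 𝓗, Π an orthogonal projection on 𝓗, Π⊥ := 1 − Π, and z ∈ ℂ. Assume there exists a bounded operator S on 𝓗 with S = Π⊥ S Π⊥, S · (Π⊥(H − z)Π⊥) = Π⊥ and (Π⊥(H − z)Π⊥) · S = Π⊥. Then: (i) H − z·1 is invertible in the algebra of bounded operators on 𝓗 if and only if there exists a bounded operator T on 𝓗 with T = Π T Π, T · (Π(H − z)Π − Π H S H Π) = Π and (Π(H − z)Π − Π H S H Π) · T = Π; and (ii) in that case (H − z·1)⁻¹ = T − T·H·S − S·H·T + S + S·H·T·H·S. -/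
section AuxRing
variable {R : Type*} [Ring R]

private lemma schur_aux_inv (p a s t : R) (hp : p * p = p)
    (hs : s = (1 - p) * s * (1 - p))
    (h1 : s * ((1 - p) * a * (1 - p)) = 1 - p)
    (h2 : ((1 - p) * a * (1 - p)) * s = 1 - p)
    (ht : t = p * t * p)
    (htc : t * (p * a * p - p * a * s * a * p) = p)
    (hct : (p * a * p - p * a * s * a * p) * t = p) :
    a * (t - t * a * s - s * a * t + s + s * a * t * a * s) = 1 ∧
    (t - t * a * s - s * a * t + s + s * a * t * a * s) * a = 1 := by
  -- basic projection facts
  have hq : (1 - p) * (1 - p) = 1 - p := by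
    simp only [mul_sub, sub_mul, one_mul, mul_one, hp]; abel
  have qs : (1 - p) * s = s := by
    conv_lhs => rw [hs]
    conv_rhs => rw [hs]
    simp only [← mul_assoc, hq]
  have sq : s * (1 - p) = s := by
    conv_lhs => rw [hs]
    conv_rhs => rw [hs]
    simp only [mul_assoc, hq]
  have pt : p * t = t := by
    conv_lhs => rw [ht]
    conv_rhs => rw [ht]
    simp only [← mul_assoc, hp]
  have tp : t * p = t := by
    conv_lhs => rw [ht]
    conv_rhs => rw [ht]
    simp only [mul_assoc, hp]
  have hqas : (1 - p) * (a * s) = 1 - p := by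
    conv_lhs => rw [← qs]
    simp only [← mul_assoc]
    simpa only [← mul_assoc] using h2
  have hsaq : s * (a * (1 - p)) = 1 - p := by
    conv_lhs => rw [← sq]
    simpa only [mul_assoc] using h1
  have L1 : ∀ x : R, (1 - p) * (a * (s * x)) = (1 - p) * x := by
    intro x
    calc (1 - p) * (a * (s * x)) = ((1 - p) * (a * s)) * x := by
          simp only [mul_assoc]
      _ = (1 - p) * x := by rw [hqas]
  have L2 : ∀ x : R, x * s * a * (1 - p) = x * (1 - p) := by
    intro x
    calc x * s * a * (1 - p) = x * (s * (a * (1 - p))) := by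
          simp only [mul_assoc]
      _ = x * (1 - p) := by rw [hsaq]
  constructor
  · -- a * r = 1
    have e1 : (1 - p) * (a * (t - t * a * s - s * a * t + s + s * a * t * a * s))
        = 1 - p := by
      simp only [mul_sub, mul_add, mul_assoc]
      simp only [L1, hqas]
      abel
    have F1 : p * (a * t) - p * (a * (s * (a * t))) = p := by
      have h := hct
      simp only [sub_mul, mul_assoc, pt] at h
      exact h
    have F2 : p * (a * (t * (a * s))) - p * (a * (s * (a * (t * (a * s)))))
        = p * (a * s) := by
      have h := congrArg (· * (a * s)) F1
      simp only [sub_mul, mul_assoc] at h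
      exact h
    have e2 : p * (a * (t - t * a * s - s * a * t + s + s * a * t * a * s)) = p := by
      simp only [mul_sub, mul_add, mul_assoc]
      rw [sub_eq_iff_eq_add.mp F1, sub_eq_iff_eq_add.mp F2]
      abel
    have hsplit : a * (t - t * a * s - s * a * t + s + s * a * t * a * s)
        = p * (a * (t - t * a * s - s * a * t + s + s * a * t * a * s))
          + (1 - p) * (a * (t - t * a * s - s * a * t + s + s * a * t * a * s)) := by
      rw [← add_mul]
      simp
    rw [hsplit, e1, e2]
    abel
  · -- r * a = 1
    have e1 : (t - t * a * s - s * a * t + s + s * a * t * a * s) * a * (1 - p)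
        = 1 - p := by
      simp only [sub_mul, add_mul]
      simp only [L2]
      rw [show s * a * (1 - p) = 1 - p by simpa only [mul_assoc] using hsaq]
      abel
    have F1 : t * a * p - t * a * s * a * p = p := by
      have h := htc
      simp only [mul_sub, ← mul_assoc, tp] at h
      exact h
    have F2 : s * a * t * a * p - s * a * t * a * s * a * p = s * a * p := by
      have h := congrArg (s * a * ·) F1
      simp only [mul_sub, ← mul_assoc] at h
      exact h
    have e2 : (t - t * a * s - s * a * t + s + s * a * t * a * s) * a * p = p := by
      simp only [sub_mul, add_mul]
      rw [sub_eq_iff_eq_add.mp F1, sub_eq_iff_eq_add.mp F2]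
      abel
    have hsplit : (t - t * a * s - s * a * t + s + s * a * t * a * s) * a
        = (t - t * a * s - s * a * t + s + s * a * t * a * s) * a * p
          + (t - t * a * s - s * a * t + s + s * a * t * a * s) * a * (1 - p) := by
      rw [← mul_add]
      simp
    rw [hsplit, e1, e2]
    abel

private lemma schur_aux_T (p a s b : R) (hp : p * p = p)
    (hs : s = (1 - p) * s * (1 - p))
    (h1 : s * ((1 - p) * a * (1 - p)) = 1 - p)
    (h2 : ((1 - p) * a * (1 - p)) * s = 1 - p)
    (hb1 : a * b = 1) (hb2 : b * a = 1) :
    p * b * p = p * (p * b * p) * p ∧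
    (p * b * p) * (p * a * p - p * a * s * a * p) = p ∧
    (p * a * p - p * a * s * a * p) * (p * b * p) = p := by
  have hq : (1 - p) * (1 - p) = 1 - p := by
    simp only [mul_sub, sub_mul, one_mul, mul_one, hp]; abel
  have qs : (1 - p) * s = s := by
    conv_lhs => rw [hs]
    conv_rhs => rw [hs]
    simp only [← mul_assoc, hq]
  have sq : s * (1 - p) = s := by
    conv_lhs => rw [hs]
    conv_rhs => rw [hs]
    simp only [mul_assoc, hq]
  have ps : p * s = 0 := by
    conv_lhs => rw [← qs, ← mul_assoc]
    rw [show p * (1 - p) = 0 by simp [mul_sub, hp], zero_mul]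
  have sp : s * p = 0 := by
    conv_lhs => rw [← sq, mul_assoc]
    rw [show (1 - p) * p = 0 by simp [sub_mul, hp], mul_zero]
  have hqas : (1 - p) * (a * s) = 1 - p := by
    conv_lhs => rw [← qs]
    simp only [← mul_assoc]
    simpa only [← mul_assoc] using h2
  have hsaq : s * (a * (1 - p)) = 1 - p := by
    conv_lhs => rw [← sq]
    simpa only [mul_assoc] using h1
  have L1 : ∀ x : R, (1 - p) * (a * (s * x)) = (1 - p) * x := by
    intro x
    calc (1 - p) * (a * (s * x)) = ((1 - p) * (a * s)) * x := by simp only [mul_assoc]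
      _ = (1 - p) * x := by rw [hqas]
  have L2 : ∀ x : R, s * (a * ((1 - p) * x)) = (1 - p) * x := by
    intro x
    calc s * (a * ((1 - p) * x)) = (s * (a * (1 - p))) * x := by simp only [mul_assoc]
      _ = (1 - p) * x := by rw [hsaq]
  have hpP : ∀ x : R, p * (p * x) = p * x := by
    intro x; rw [← mul_assoc, hp]
  have hbaP : ∀ x : R, p * (b * (a * x)) = p * x := by
    intro x
    rw [show b * (a * x) = (b * a) * x by rw [mul_assoc], hb2, one_mul]
  have habP : ∀ x : R, a * (b * x) = x := by
    intro x
    rw [show a * (b * x) = (a * b) * x by rw [mul_assoc], hb1, one_mul]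
  have psP : ∀ x : R, p * (s * x) = 0 := by
    intro x; rw [← mul_assoc, ps, zero_mul]
  refine ⟨by
    simp only [← mul_assoc, hp, show ∀ x : R, x * p * p = x * p from
      fun x => by rw [mul_assoc, hp]], ?_, ?_⟩
  · -- TC = p
    have splitR : ∀ x : R, p * (b * (p * x)) = p * (b * x) - p * (b * ((1 - p) * x)) := by
      intro x
      rw [show (p : R) * x = x - (1 - p) * x by rw [sub_mul, one_mul]; abel,
        mul_sub, mul_sub]
    simp only [mul_sub, mul_assoc, hpP]
    rw [splitR (a * p), splitR (a * (s * (a * p)))]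
    rw [hbaP p, hbaP (s * (a * p)), psP, L1 (a * p)]
    rw [hp]
    abel
  · -- CT = p
    simp only [sub_mul, mul_assoc, hpP]
    rw [show (p : R) * (b * p) = b * p - (1 - p) * (b * p) by
      rw [sub_mul, one_mul]; abel]
    simp only [mul_sub, habP, sp, L2, hp, mul_zero, zero_sub, mul_neg,
      sub_neg_eq_add]
    abel

end AuxRing

/-- Feshbach–Schur (Schur complement) decomposition of the resolvent. -/
theorem feshbach_schur_resolvent
    {𝓗 : Type*} [NormedAddCommGroup 𝓗] [InnerProductSpace ℂ 𝓗] [CompleteSpace 𝓗]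
    (H P : 𝓗 →L[ℂ] 𝓗) (hH : IsSelfAdjoint H)
    (hP2 : P * P = P) (hPsa : IsSelfAdjoint P)
    (z : ℂ) (S : 𝓗 →L[ℂ] 𝓗)
    (hSblock : S = (1 - P) * S * (1 - P))
    (hSinv1 : S * ((1 - P) * (H - z • 1) * (1 - P)) = 1 - P)
    (hSinv2 : ((1 - P) * (H - z • 1) * (1 - P)) * S = 1 - P) :
    (IsUnit (H - z • 1) ↔
      ∃ T : 𝓗 →L[ℂ] 𝓗, T = P * T * P ∧
        T * (P * (H - z • 1) * P - P * H * S * H * P) = P ∧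
        (P * (H - z • 1) * P - P * H * S * H * P) * T = P) ∧
    (∀ T : 𝓗 →L[ℂ] 𝓗, T = P * T * P →
        T * (P * (H - z • 1) * P - P * H * S * H * P) = P →
        (P * (H - z • 1) * P - P * H * S * H * P) * T = P →
        (H - z • 1) * (T - T * H * S - S * H * T + S + S * H * T * H * S) = 1 ∧
        (T - T * H * S - S * H * T + S + S * H * T * H * S) * (H - z • 1) = 1) := by
  -- basic facts
  have hq : ((1 : 𝓗 →L[ℂ] 𝓗) - P) * (1 - P) = 1 - P := by
    simp only [mul_sub, sub_mul, one_mul, mul_one, hP2]; abel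
  have qs : ((1 : 𝓗 →L[ℂ] 𝓗) - P) * S = S := by
    conv_lhs => rw [hSblock]
    conv_rhs => rw [hSblock]
    simp only [← mul_assoc, hq]
  have sq : S * ((1 : 𝓗 →L[ℂ] 𝓗) - P) = S := by
    conv_lhs => rw [hSblock]
    conv_rhs => rw [hSblock]
    simp only [mul_assoc, hq]
  have ps : P * S = 0 := by
    conv_lhs => rw [← qs, ← mul_assoc]
    rw [show P * (1 - P) = 0 by simp [mul_sub, hP2], zero_mul]
  have sp : S * P = 0 := by
    conv_lhs => rw [← sq, mul_assoc]
    rw [show ((1 : 𝓗 →L[ℂ] 𝓗) - P) * P = 0 by simp [sub_mul, hP2], mul_zero]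
  -- removing the z-shift across S-blocks
  have key : ∀ X Y : 𝓗 →L[ℂ] 𝓗, X * Y = 0 →
      X * (H - z • 1) * Y = X * H * Y := by
    intro X Y h
    simp only [mul_sub, sub_mul, mul_smul_comm, smul_mul_assoc, mul_one, h,
      smul_zero, sub_zero]
  have e : P * (H - z • 1) * S * (H - z • 1) * P = P * H * S * H * P := by
    rw [key P S ps, key (P * H * S) P (by rw [mul_assoc, sp, mul_zero])]
  -- part (ii)
  have part2 : ∀ T : 𝓗 →L[ℂ] 𝓗, T = P * T * P →
      T * (P * (H - z • 1) * P - P * H * S * H * P) = P →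
      (P * (H - z • 1) * P - P * H * S * H * P) * T = P →
      (H - z • 1) * (T - T * H * S - S * H * T + S + S * H * T * H * S) = 1 ∧
      (T - T * H * S - S * H * T + S + S * H * T * H * S) * (H - z • 1) = 1 := by
    intro T hT hTC hCT
    have ts : T * S = 0 := by
      conv_lhs => rw [hT]
      rw [mul_assoc, ps, mul_zero]
    have st : S * T = 0 := by
      conv_lhs => rw [hT]
      rw [← mul_assoc, ← mul_assoc, sp, zero_mul, zero_mul]
    have hTC' : T * (P * (H - z • 1) * P -
        P * (H - z • 1) * S * (H - z • 1) * P) = P := by rw [e]; exact hTC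
    have hCT' : (P * (H - z • 1) * P -
        P * (H - z • 1) * S * (H - z • 1) * P) * T = P := by rw [e]; exact hCT
    have main := schur_aux_inv P (H - z • 1) S T hP2 hSblock hSinv1 hSinv2 hT hTC' hCT'
    have g1 : T * H * S = T * (H - z • 1) * S := (key T S ts).symm
    have g2 : S * H * T = S * (H - z • 1) * T := (key S T st).symm
    have g3 : S * (H - z • 1) * T * H * S = S * (H - z • 1) * T * (H - z • 1) * S :=
      (key (S * (H - z • 1) * T) S (by rw [mul_assoc, ts, mul_zero])).symm
    constructor
    · rw [g1, g2, g3]; exact main.1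
    · rw [g1, g2, g3]; exact main.2
  refine ⟨⟨?_, ?_⟩, part2⟩
  · intro hU
    obtain ⟨u, hu⟩ := hU
    have hb1 : (H - z • 1) * (↑u⁻¹ : 𝓗 →L[ℂ] 𝓗) = 1 := by rw [← hu]; exact u.mul_inv
    have hb2 : (↑u⁻¹ : 𝓗 →L[ℂ] 𝓗) * (H - z • 1) = 1 := by rw [← hu]; exact u.inv_mul
    obtain ⟨c1, c2, c3⟩ := schur_aux_T P (H - z • 1) S (↑u⁻¹ : 𝓗 →L[ℂ] 𝓗)
      hP2 hSblock hSinv1 hSinv2 hb1 hb2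
    rw [e] at c2 c3
    exact ⟨P * (↑u⁻¹ : 𝓗 →L[ℂ] 𝓗) * P, c1, c2, c3⟩
  · rintro ⟨T, hT, hTC, hCT⟩
    obtain ⟨h1, h2⟩ := part2 T hT hTC hCT
    exact ⟨⟨H - z • 1, T - T * H * S - S * H * T + S + S * H * T * H * S, h1, h2⟩, rfl⟩
end

section
/- Let H be a complex Hilbert space and (φ_j)_{j∈ℕ} a Bessel family in H with bound B, and let Q be its frame operator. Assume ‖Q² − Q‖ ≤ δ for some 0 ≤ δ < 1/4. Then there exist a bounded self-adjoint operator Θ on H commuting with Q and an orthogonal projection P on H commuting with Q such that Θ Q Θ = P, ‖Q − P‖ ≤ 2δ, each vector Θφ_j lies in the range of P, and the family (Θφ_j)_{j∈ℕ} is a Parseval frame for the range of P: for every f in the range of P one has Σ_{j∈ℕ} |⟨Θφ_j, f⟩|² = ‖f‖² and f = Σ_{j∈ℕ} ⟨Θφ_j, f⟩·Θφ_j, the latter family being summable in H. -/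
/-!
The frame operator `Q` of a Bessel family is self-adjoint, and `‖Q² - Q‖ ≤ δ` confines its
spectrum to `{t | |t (t - 1)| ≤ δ}`, which for `δ < 1/4` lies within `2δ` of `{0, 1}` and misses
`1/2`. The continuous functional calculus therefore applies to the step function `χ` of
`(1/2, ∞)` and to `χ(t)/√t`, producing a projection `P = χ(Q)` with `‖Q - P‖ ≤ 2δ` and a
self-adjoint `Θ` with `Θ Q Θ = P`. Since the frame operator of `(Θ φ_j)` is `Θ Q Θ* = P`, which
is the identity on the range of `P`, this family is a Parseval frame for that range.
-/

open scoped InnerProductSpace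
open Set RCLike

section Frames

variable (𝕜 : Type*) {ι H E : Type*} [RCLike 𝕜] [NormedAddCommGroup H] [InnerProductSpace 𝕜 H]
  [NormedAddCommGroup E] [InnerProductSpace 𝕜 E]

def IsBesselFamily (φ : ι → H) (B : ℝ) : Prop :=
  ∀ f, Summable (fun j => ‖⟪φ j, f⟫_𝕜‖ ^ 2) ∧ ∑' j, ‖⟪φ j, f⟫_𝕜‖ ^ 2 ≤ B * ‖f‖ ^ 2

variable {𝕜}

def HasFrameOperator (φ : ι → H) (Q : H →L[𝕜] H) : Prop :=
  ∀ g, HasSum (fun j => ⟪φ j, g⟫_𝕜 • φ j) (Q g)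

lemma norm_sum_smul_sq_le {φ : ι → H} {B : ℝ} (hB : 0 ≤ B) {s : Finset ι}
    (hφ : ∀ f, ∑ j ∈ s, ‖⟪φ j, f⟫_𝕜‖ ^ 2 ≤ B * ‖f‖ ^ 2) (c : ι → 𝕜) :
    ‖∑ j ∈ s, c j • φ j‖ ^ 2 ≤ B * ∑ j ∈ s, ‖c j‖ ^ 2 := by
  set h := ∑ j ∈ s, c j • φ j
  set S := ∑ j ∈ s, ‖c j‖ ^ 2
  have hle : ‖h‖ ^ 2 ≤ ∑ j ∈ s, ‖c j‖ * ‖⟪φ j, h⟫_𝕜‖ := calc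
    ‖h‖ ^ 2 = re ⟪h, ∑ j ∈ s, c j • φ j⟫_𝕜 := (inner_self_eq_norm_sq h).symm
    _ = re (∑ j ∈ s, c j * ⟪h, φ j⟫_𝕜) := by simp only [inner_sum, inner_smul_right]
    _ ≤ ‖∑ j ∈ s, c j * ⟪h, φ j⟫_𝕜‖ := re_le_norm _
    _ ≤ ∑ j ∈ s, ‖c j‖ * ‖⟪φ j, h⟫_𝕜‖ :=
      (norm_sum_le _ _).trans_eq (by simp only [norm_mul, norm_inner_symm])
  have hcs : ‖h‖ ^ 2 * ‖h‖ ^ 2 ≤ (B * S) * ‖h‖ ^ 2 := calc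
    ‖h‖ ^ 2 * ‖h‖ ^ 2 ≤ (∑ j ∈ s, ‖c j‖ * ‖⟪φ j, h⟫_𝕜‖) ^ 2 := by rw [← sq]; gcongr
    _ ≤ S * ∑ j ∈ s, ‖⟪φ j, h⟫_𝕜‖ ^ 2 := Finset.sum_mul_sq_le_sq_mul_sq _ _ _
    _ ≤ S * (B * ‖h‖ ^ 2) := by gcongr; exact hφ h
    _ = (B * S) * ‖h‖ ^ 2 := by ring
  rcases (sq_nonneg ‖h‖).eq_or_lt with h0 | hpos
  · rw [← h0]; positivity
  · exact le_of_mul_le_mul_right hcs hpos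

namespace IsBesselFamily

variable {φ : ι → H} {B : ℝ}

lemma mono (hφ : IsBesselFamily 𝕜 φ B) {B' : ℝ} (hB : B ≤ B') : IsBesselFamily 𝕜 φ B' :=
  fun f => ⟨(hφ f).1, (hφ f).2.trans <| by gcongr⟩

lemma sum_norm_inner_sq_le (hφ : IsBesselFamily 𝕜 φ B) (s : Finset ι) (f : H) :
    ∑ j ∈ s, ‖⟪φ j, f⟫_𝕜‖ ^ 2 ≤ B * ‖f‖ ^ 2 :=
  ((hφ f).1.sum_le_tsum s fun _ _ => by positivity).trans (hφ f).2

lemma summable_smul [CompleteSpace H] (hφ : IsBesselFamily 𝕜 φ B) {c : ι → 𝕜}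
    (hc : Summable fun j => ‖c j‖ ^ 2) : Summable fun j => c j • φ j := by
  set B' := max B 1
  have hB' : 0 < B' := zero_lt_one.trans_le (le_max_right _ _)
  have hfin (s : Finset ι) : ‖∑ j ∈ s, c j • φ j‖ ^ 2 ≤ B' * ∑ j ∈ s, ‖c j‖ ^ 2 :=
    norm_sum_smul_sq_le hB'.le ((hφ.mono (le_max_left B 1)).sum_norm_inner_sq_le s) c
  refine summable_iff_vanishing_norm.mpr fun ε hε => ?_
  obtain ⟨s, hs⟩ := summable_iff_vanishing_norm.mp hc (ε ^ 2 / B') (by positivity)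
  refine ⟨s, fun t ht => lt_of_pow_lt_pow_left₀ 2 hε.le ((hfin t).trans_lt ?_)⟩
  have htail := hs t ht
  rw [Real.norm_of_nonneg (by positivity)] at htail
  calc B' * ∑ j ∈ t, ‖c j‖ ^ 2 < B' * (ε ^ 2 / B') := by gcongr
    _ = ε ^ 2 := by field_simp

lemma hasFrameOperator [CompleteSpace H] (hφ : IsBesselFamily 𝕜 φ B) {Q : H →L[𝕜] H}
    (hQ : ∀ f g, ⟪f, Q g⟫_𝕜 = ∑' j, ⟪f, φ j⟫_𝕜 * ⟪φ j, g⟫_𝕜) : HasFrameOperator φ Q := by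
  intro g
  obtain ⟨L, hL⟩ := hφ.summable_smul (hφ g).1
  convert hL
  refine ext_inner_left 𝕜 fun f => ?_
  have hsum := (hL.mapL (innerSL 𝕜 f)).tsum_eq
  simp only [innerSL_apply_apply, inner_smul_right] at hsum
  simp only [hQ, ← hsum, mul_comm]

end IsBesselFamily

namespace HasFrameOperator

variable {φ : ι → H} {Q : H →L[𝕜] H}

lemma hasSum_norm_inner_sq (hQ : HasFrameOperator φ Q) (f : H) :
    HasSum (fun j => ‖⟪φ j, f⟫_𝕜‖ ^ 2) (re ⟪f, Q f⟫_𝕜) := by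
  refine (hasSum_re 𝕜 ((hQ f).mapL (innerSL 𝕜 f))).congr_fun fun j => ?_
  rw [innerSL_apply_apply, inner_smul_right, ← inner_conj_symm f (φ j), mul_conj, ← ofReal_pow,
    ofReal_re]

lemma isSelfAdjoint [CompleteSpace H] (hQ : HasFrameOperator φ Q) : IsSelfAdjoint Q := by
  refine ContinuousLinearMap.isSelfAdjoint_iff_isSymmetric.mpr fun f g => ?_
  rw [ContinuousLinearMap.coe_coe]
  have hl := (hasSum_conj' 𝕜).mpr ((hQ f).mapL (innerSL 𝕜 g))
  have hr := (hQ g).mapL (innerSL 𝕜 f)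
  simp only [innerSL_apply_apply, inner_smul_right, map_mul, inner_conj_symm] at hl hr
  exact hl.unique (by simpa only [mul_comm] using hr)

lemma comp [CompleteSpace H] [CompleteSpace E] (hQ : HasFrameOperator φ Q) (T : H →L[𝕜] E) :
    HasFrameOperator (fun j => T (φ j)) (T ∘L Q ∘L ContinuousLinearMap.adjoint T) := fun g => by
  simpa [ContinuousLinearMap.adjoint_inner_right] using
    (hQ (ContinuousLinearMap.adjoint T g)).mapL T

lemma hasSum_of_apply_eq_self (hQ : HasFrameOperator φ Q) {f : H} (hf : Q f = f) :
    HasSum (fun j => ‖⟪φ j, f⟫_𝕜‖ ^ 2) (‖f‖ ^ 2) ∧ HasSum (fun j => ⟪φ j, f⟫_𝕜 • φ j) f := by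
  refine ⟨?_, by simpa only [hf] using hQ f⟩
  simpa [hf, inner_self_eq_norm_sq] using hQ.hasSum_norm_inner_sq f

end HasFrameOperator

end Frames

noncomputable def halfCutoff (t : ℝ) : ℝ := if 1 / 2 < t then 1 else 0

noncomputable def halfCutoffInvSqrt (t : ℝ) : ℝ := if 1 / 2 < t then (√t)⁻¹ else 0

lemma abs_le_two_mul_of_abs_mul_sub_one_le {t δ : ℝ} (ht : |t * (t - 1)| ≤ δ) (h : t ≤ 1 / 2) :
    |t| ≤ 2 * δ := by
  have : 1 / 2 ≤ |t - 1| := by rw [abs_sub_comm, abs_of_pos (by linarith)]; linarith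
  rw [abs_mul] at ht
  nlinarith [abs_nonneg t]

lemma abs_sub_halfCutoff_le {t δ : ℝ} (ht : |t * (t - 1)| ≤ δ) : |t - halfCutoff t| ≤ 2 * δ := by
  unfold halfCutoff
  split_ifs with h
  · have hsymm : |(1 - t) * (1 - t - 1)| ≤ δ := by convert ht using 2; ring
    simpa [abs_sub_comm] using abs_le_two_mul_of_abs_mul_sub_one_le hsymm (by linarith)
  · simpa using abs_le_two_mul_of_abs_mul_sub_one_le ht (not_lt.mp h)

lemma continuousOn_ite_lt {s : Set ℝ} {c : ℝ} (hc : c ∉ s) {f : ℝ → ℝ}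
    (hf : ContinuousOn f (Ioi c)) : ContinuousOn (fun t => if c < t then f t else 0) s := by
  refine ContinuousOn.if ?_ (hf.mono ?_) continuousOn_const
  · rintro a ⟨has, ha⟩
    rw [show {x | c < x} = Ioi c from rfl, frontier_Ioi, mem_singleton_iff] at ha
    exact absurd (ha ▸ has) hc
  · rintro a ⟨has, ha⟩
    rw [show {x | c < x} = Ioi c from rfl, closure_Ioi] at ha
    exact (mem_Ici.mp ha).lt_of_ne (by rintro rfl; exact hc has)

section CStarAlgebra

variable {A : Type*} [CStarAlgebra A] {a : A}

lemma abs_mul_sub_one_le_of_mem_spectrum (ha : IsSelfAdjoint a) {t : ℝ}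
    (ht : t ∈ spectrum ℝ a) : |t * (t - 1)| ≤ ‖a * a - a‖ := by
  obtain _ | _ := subsingleton_or_nontrivial A
  · simp [spectrum.of_subsingleton] at ht
  have hcfc : cfc (fun t : ℝ => t * (t - 1)) a = a * a - a := by
    rw [cfc_mul _ _ a, cfc_sub _ _ a, cfc_id' ℝ a, cfc_const_one ℝ a, mul_sub, mul_one]
  have hmem : t * (t - 1) ∈ spectrum ℝ (a * a - a) := by
    rw [← hcfc, cfc_map_spectrum _ a]
    exact ⟨t, ht, rfl⟩
  simpa using spectrum.norm_le_norm_of_mem hmem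

lemma half_notMem_spectrum (ha : IsSelfAdjoint a) (h : ‖a * a - a‖ < 1 / 4) :
    (1 / 2 : ℝ) ∉ spectrum ℝ a := fun hmem => by
  have := abs_mul_sub_one_le_of_mem_spectrum ha hmem
  norm_num at this
  linarith

lemma continuousOn_halfCutoff (hspec : (1 / 2 : ℝ) ∉ spectrum ℝ a) :
    ContinuousOn halfCutoff (spectrum ℝ a) :=
  continuousOn_ite_lt hspec continuousOn_const

lemma continuousOn_halfCutoffInvSqrt (hspec : (1 / 2 : ℝ) ∉ spectrum ℝ a) :
    ContinuousOn halfCutoffInvSqrt (spectrum ℝ a) :=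
  continuousOn_ite_lt hspec <| Real.continuous_sqrt.continuousOn.inv₀ fun t ht => by
    have : (0 : ℝ) < t := lt_trans (by norm_num) ht
    positivity

lemma isIdempotentElem_cfc_halfCutoff (hspec : (1 / 2 : ℝ) ∉ spectrum ℝ a) :
    IsIdempotentElem (cfc halfCutoff a) := by
  have hc := continuousOn_halfCutoff hspec
  rw [IsIdempotentElem, ← cfc_mul _ _ a]
  refine cfc_congr fun t _ => ?_
  unfold halfCutoff
  split_ifs <;> norm_num

lemma cfc_halfCutoff_mul_cfc_halfCutoffInvSqrt (hspec : (1 / 2 : ℝ) ∉ spectrum ℝ a) :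
    cfc halfCutoff a * cfc halfCutoffInvSqrt a = cfc halfCutoffInvSqrt a := by
  have hc := continuousOn_halfCutoff hspec
  have hg := continuousOn_halfCutoffInvSqrt hspec
  rw [← cfc_mul _ _ a]
  refine cfc_congr fun t _ => ?_
  unfold halfCutoff halfCutoffInvSqrt
  split_ifs <;> norm_num

lemma cfc_halfCutoffInvSqrt_mul_mul_self (ha : IsSelfAdjoint a)
    (hspec : (1 / 2 : ℝ) ∉ spectrum ℝ a) :
    cfc halfCutoffInvSqrt a * a * cfc halfCutoffInvSqrt a = cfc halfCutoff a := by
  have hg := continuousOn_halfCutoffInvSqrt hspec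
  have hprod : cfc halfCutoffInvSqrt a * a * cfc halfCutoffInvSqrt a =
      cfc (fun t => halfCutoffInvSqrt t * t * halfCutoffInvSqrt t) a := by
    rw [cfc_mul _ _ a, cfc_mul _ _ a, cfc_id' ℝ a]
  rw [hprod]
  refine cfc_congr fun t _ => ?_
  unfold halfCutoff halfCutoffInvSqrt
  split_ifs with h
  · have ht : 0 ≤ t := by linarith
    field_simp
    rw [Real.sq_sqrt ht]
  · simp

lemma norm_sub_cfc_halfCutoff_le (ha : IsSelfAdjoint a) (hspec : (1 / 2 : ℝ) ∉ spectrum ℝ a) :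
    ‖a - cfc halfCutoff a‖ ≤ 2 * ‖a * a - a‖ := by
  have hc := continuousOn_halfCutoff hspec
  have hsub : a - cfc halfCutoff a = cfc (fun t => t - halfCutoff t) a := by
    rw [cfc_sub _ _ a, cfc_id' ℝ a]
  rw [hsub]
  exact norm_cfc_le (by positivity) fun t ht =>
    abs_sub_halfCutoff_le (abs_mul_sub_one_le_of_mem_spectrum ha ht)

end CStarAlgebra

theorem parseval_frame_from_quasi_projection_general
    {H : Type*} [NormedAddCommGroup H] [InnerProductSpace ℂ H] [CompleteSpace H]
    (φ : ℕ → H) (B : ℝ)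
    (hBessel : ∀ f : H, Summable (fun j => ‖(inner ℂ (φ j) f : ℂ)‖ ^ 2) ∧
        ∑' j, ‖(inner ℂ (φ j) f : ℂ)‖ ^ 2 ≤ B * ‖f‖ ^ 2)
    (Q : H →L[ℂ] H)
    (hQ : ∀ f g : H, (inner ℂ f (Q g) : ℂ) = ∑' j, (inner ℂ f (φ j) : ℂ) * (inner ℂ (φ j) g : ℂ))
    (δ : ℝ) (hδ : δ < 1 / 4)
    (hQδ : ‖Q * Q - Q‖ ≤ δ) :
    ∃ Θ P : H →L[ℂ] H,
      IsSelfAdjoint Θ ∧ Θ * Q = Q * Θ ∧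
      P * P = P ∧ IsSelfAdjoint P ∧ P * Q = Q * P ∧
      Θ * Q * Θ = P ∧ ‖Q - P‖ ≤ 2 * δ ∧
      (∀ j, Θ (φ j) ∈ LinearMap.range (P : H →ₗ[ℂ] H)) ∧
      (∀ f ∈ LinearMap.range (P : H →ₗ[ℂ] H),
        HasSum (fun j => ‖(inner ℂ (Θ (φ j)) f : ℂ)‖ ^ 2) (‖f‖ ^ 2) ∧
        HasSum (fun j => (inner ℂ (Θ (φ j)) f : ℂ) • Θ (φ j)) f) := by
  have hφ : IsBesselFamily ℂ φ B := hBessel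
  have hframe : HasFrameOperator φ Q := hφ.hasFrameOperator hQ
  have hsa : IsSelfAdjoint Q := hframe.isSelfAdjoint
  have hspec := half_notMem_spectrum hsa (hQδ.trans_lt hδ)
  set Θ := cfc halfCutoffInvSqrt Q
  set P := cfc halfCutoff Q
  have hΘsa : IsSelfAdjoint Θ := cfc_predicate _ _
  have hP : IsIdempotentElem P := isIdempotentElem_cfc_halfCutoff hspec
  have hΘQΘ : Θ * Q * Θ = P := cfc_halfCutoffInvSqrt_mul_mul_self hsa hspec
  have hPΘ : P * Θ = Θ := cfc_halfCutoff_mul_cfc_halfCutoffInvSqrt hspec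
  have hframeΘ : HasFrameOperator (fun j => Θ (φ j)) P := by
    have := hframe.comp Θ
    rwa [hΘsa.adjoint_eq, ← ContinuousLinearMap.mul_def, ← ContinuousLinearMap.mul_def,
      ← mul_assoc, hΘQΘ] at this
  refine ⟨Θ, P, hΘsa, ((Commute.refl Q).cfc_real _).eq, hP, cfc_predicate _ _,
    ((Commute.refl Q).cfc_real _).eq, hΘQΘ, ?_, fun j => ⟨Θ (φ j), congr($hPΘ (φ j))⟩, ?_⟩
  · linarith [norm_sub_cfc_halfCutoff_le hsa hspec]
  · rintro f ⟨g, rfl⟩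
    exact hframeΘ.hasSum_of_apply_eq_self congr($hP g)

/-- From a Bessel family whose frame operator `Q` is an approximate projection,
one constructs a genuine orthogonal projection `P = Θ Q Θ` and a Parseval frame
`(Θ φ_j)` for the range of `P`. -/
theorem parseval_frame_from_quasi_projection
    {H : Type*} [NormedAddCommGroup H] [InnerProductSpace ℂ H] [CompleteSpace H]
    (φ : ℕ → H) (B : ℝ)
    (hBessel : ∀ f : H, Summable (fun j => ‖(inner ℂ (φ j) f : ℂ)‖ ^ 2) ∧
        ∑' j, ‖(inner ℂ (φ j) f : ℂ)‖ ^ 2 ≤ B * ‖f‖ ^ 2)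
    (Q : H →L[ℂ] H)
    (hQ : ∀ f g : H, (inner ℂ f (Q g) : ℂ) = ∑' j, (inner ℂ f (φ j) : ℂ) * (inner ℂ (φ j) g : ℂ))
    (δ : ℝ) (hδ0 : 0 ≤ δ) (hδ : δ < 1 / 4)
    (hQδ : ‖Q * Q - Q‖ ≤ δ) :
    ∃ Θ P : H →L[ℂ] H,
      IsSelfAdjoint Θ ∧ Θ * Q = Q * Θ ∧
      P * P = P ∧ IsSelfAdjoint P ∧ P * Q = Q * P ∧
      Θ * Q * Θ = P ∧ ‖Q - P‖ ≤ 2 * δ ∧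
      (∀ j, Θ (φ j) ∈ LinearMap.range (P : H →ₗ[ℂ] H)) ∧
      (∀ f ∈ LinearMap.range (P : H →ₗ[ℂ] H),
        HasSum (fun j => ‖(inner ℂ (Θ (φ j)) f : ℂ)‖ ^ 2) (‖f‖ ^ 2) ∧
        HasSum (fun j => (inner ℂ (Θ (φ j)) f : ℂ) • Θ (φ j)) f) :=
  parseval_frame_from_quasi_projection_general φ B hBessel Q hQ δ hδ hQδ
end

section
/- Let Q be a bounded self-adjoint operator on a complex Hilbert space with ‖Q² − Q‖ ≤ δ for some 0 ≤ δ < 1/4. Then every λ in the spectrum of Q satisfies |λ| ≤ 2δ or |λ − 1| ≤ 2δ; in particular the spectrum of Q is contained in the union of the closed disks of radius 2δ centered at 0 and at 1. -/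
/-- If `Q` is a bounded self-adjoint operator with `‖Q² − Q‖ ≤ δ < 1/4`, then the
spectrum of `Q` is contained in the union of the closed disks of radius `2δ`
centered at `0` and at `1`. -/
theorem spectrum_near_zero_or_one
    {H : Type*} [NormedAddCommGroup H] [InnerProductSpace ℂ H] [CompleteSpace H]
    (Q : H →L[ℂ] H) (hQ : IsSelfAdjoint Q)
    (δ : ℝ) (hδ0 : 0 ≤ δ) (hδ : δ < 1 / 4) (hQδ : ‖Q ^ 2 - Q‖ ≤ δ) :
    (∀ l ∈ spectrum ℂ Q, ‖l‖ ≤ 2 * δ ∨ ‖l - 1‖ ≤ 2 * δ) ∧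
    spectrum ℂ Q ⊆ Metric.closedBall 0 (2 * δ) ∪ Metric.closedBall 1 (2 * δ) := by
  have key : ∀ l ∈ spectrum ℂ Q, ‖l‖ ≤ 2 * δ ∨ ‖l - 1‖ ≤ 2 * δ := by
    intro l hl
    rcases subsingleton_or_nontrivial H with hs | hn
    · exfalso
      have : IsUnit ((algebraMap ℂ (H →L[ℂ] H)) l - Q) := by
        have : Subsingleton (H →L[ℂ] H) := ⟨fun _ _ => ContinuousLinearMap.ext fun x => Subsingleton.elim _ _⟩
        exact isUnit_of_subsingleton _
      exact (spectrum.mem_iff.mp hl) this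
    have hmem : l ^ 2 - l ∈ spectrum ℂ (Q ^ 2 - Q) := by
      have := spectrum.subset_polynomial_aeval Q (Polynomial.X ^ 2 - Polynomial.X : Polynomial ℂ)
      have h1 : (Polynomial.X ^ 2 - Polynomial.X : Polynomial ℂ).eval l = l ^ 2 - l := by simp
      have h2 : Polynomial.aeval Q (Polynomial.X ^ 2 - Polynomial.X : Polynomial ℂ) = Q ^ 2 - Q := by
        simp
      have := this ⟨l, hl, h1⟩
      rwa [h2] at this
    have hnorm : ‖l ^ 2 - l‖ ≤ δ := le_trans (spectrum.norm_le_norm_of_mem hmem) hQδ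
    have hprod : ‖l‖ * ‖l - 1‖ ≤ δ := by
      have : l ^ 2 - l = l * (l - 1) := by ring
      rw [this, norm_mul] at hnorm
      exact hnorm
    have hsum : (1 : ℝ) ≤ ‖l‖ + ‖l - 1‖ := by
      calc (1 : ℝ) = ‖l - (l - 1)‖ := by norm_num
        _ ≤ ‖l‖ + ‖l - 1‖ := norm_sub_le _ _
    by_cases h : ‖l‖ ≤ ‖l - 1‖
    · left
      have hhalf : (1 : ℝ) / 2 ≤ ‖l - 1‖ := by linarith
      nlinarith [norm_nonneg l, norm_nonneg (l - 1)]
    · right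
      push_neg at h
      have hhalf : (1 : ℝ) / 2 ≤ ‖l‖ := by linarith
      nlinarith [norm_nonneg l, norm_nonneg (l - 1)]
  refine ⟨key, fun l hl => ?_⟩
  rcases key l hl with h | h
  · left; simpa [Metric.mem_closedBall, dist_eq_norm] using h
  · right; simpa [Metric.mem_closedBall, dist_eq_norm] using h
end

section
/- Let Q be a bounded self-adjoint operator on a complex Hilbert space whose spectrum is contained in [−δ, δ] ∪ [1−δ, 1+δ] for some 0 ≤ δ < 1/2. Then there exist a bounded self-adjoint operator Θ commuting with Q and an orthogonal projection P commuting with Q such that Θ Q Θ = P, Θ² Q = P, and ‖Q − P‖ ≤ δ. -/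
set_option maxHeartbeats 1000000


/-- A self-adjoint operator whose spectrum is contained in
`[−δ, δ] ∪ [1−δ, 1+δ]` with `δ < 1/2` admits a commuting self-adjoint `Θ` and a
commuting orthogonal projection `P` with `Θ Q Θ = P`, `Θ² Q = P` and `‖Q − P‖ ≤ δ`. -/
theorem square_root_intertwiner_for_quasi_projection
    {H : Type*} [NormedAddCommGroup H] [InnerProductSpace ℂ H] [CompleteSpace H]
    (Q : H →L[ℂ] H) (hQ : IsSelfAdjoint Q)
    (δ : ℝ) (hδ0 : 0 ≤ δ) (hδ : δ < 1 / 2)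
    (hspec : spectrum ℂ Q ⊆
      (fun t : ℝ => (t : ℂ)) '' (Set.Icc (-δ) δ ∪ Set.Icc (1 - δ) (1 + δ))) :
    ∃ Θ P : H →L[ℂ] H,
      IsSelfAdjoint Θ ∧ Θ * Q = Q * Θ ∧
      P * P = P ∧ IsSelfAdjoint P ∧ P * Q = Q * P ∧
      Θ * Q * Θ = P ∧ Θ * Θ * Q = P ∧ ‖Q - P‖ ≤ δ := by
  have h2δ : (0:ℝ) < 1 - 2 * δ := by linarith
  have h1δ : (0:ℝ) < 1 - δ := by linarith
  set g : ℝ → ℝ := fun t => min 1 (max 0 ((t - δ) / (1 - 2 * δ))) with hg_def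
  set f : ℝ → ℝ := fun t => g t / Real.sqrt (max t (1 - δ)) with hf_def
  have hgc : Continuous g := by
    apply Continuous.min continuous_const
    exact Continuous.max continuous_const (by fun_prop)
  have hsqrtpos : ∀ t : ℝ, 0 < Real.sqrt (max t (1 - δ)) := fun t =>
    Real.sqrt_pos.mpr (lt_of_lt_of_le h1δ (le_max_right _ _))
  have hfc : Continuous f := by
    apply hgc.div (Real.continuous_sqrt.comp (continuous_id.max continuous_const))
    exact fun t => (hsqrtpos t).ne'
  -- membership in the two intervals for points of the real spectrum
  have hmem : ∀ t ∈ spectrum ℝ Q, t ∈ Set.Icc (-δ) δ ∪ Set.Icc (1 - δ) (1 + δ) := by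
    intro t ht
    have h1 : (t : ℂ) ∈ spectrum ℂ Q := spectrum.algebraMap_mem ℂ ht
    obtain ⟨s, hs, hst⟩ := hspec h1
    have : s = t := Complex.ofReal_inj.mp hst
    rwa [this] at hs
  have hg_zero : ∀ t : ℝ, t ∈ Set.Icc (-δ) δ → g t = 0 := by
    intro t h
    have h1 : (t - δ) / (1 - 2 * δ) ≤ 0 :=
      div_nonpos_iff.mpr (Or.inr ⟨by linarith [h.2], h2δ.le⟩)
    simp only [hg_def]
    rw [max_eq_left h1, min_eq_right zero_le_one]
  have hg_one : ∀ t : ℝ, t ∈ Set.Icc (1 - δ) (1 + δ) → g t = 1 := by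
    intro t h
    have h1 : (1:ℝ) ≤ (t - δ) / (1 - 2 * δ) := by
      rw [le_div_iff₀ h2δ]; linarith [h.1]
    simp only [hg_def]
    rw [max_eq_right (le_trans zero_le_one h1), min_eq_left h1]
  -- pointwise facts on the spectrum
  have hval : ∀ t ∈ spectrum ℝ Q, (g t = 0 ∧ f t = 0) ∨ (g t = 1 ∧ f t * f t * t = 1) := by
    intro t ht
    rcases hmem t ht with h | h
    · left
      have hg0 : g t = 0 := hg_zero t h
      exact ⟨hg0, by simp [hf_def, hg0]⟩
    · right
      have hg1 : g t = 1 := hg_one t h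
      have htpos : 0 < t := lt_of_lt_of_le h1δ h.1
      have hmax : max t (1 - δ) = t := max_eq_left h.1
      have hf1 : f t = 1 / Real.sqrt t := by simp [hf_def, hg1, hmax]
      have hss : Real.sqrt t * Real.sqrt t = t := Real.mul_self_sqrt htpos.le
      refine ⟨hg1, ?_⟩
      rw [hf1, div_mul_div_comm, one_mul, hss, div_mul_eq_mul_div, one_mul,
        div_self htpos.ne']
  set Θ := cfc f Q with hΘ
  set P := cfc g Q with hP
  have hΘsa : IsSelfAdjoint Θ := cfc_predicate f Q
  have hPsa : IsSelfAdjoint P := cfc_predicate g Q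
  have mulQ : ∀ h : ℝ → ℝ, Continuous h →
      cfc h Q * Q = cfc (fun t => h t * t) Q := by
    intro h hc
    have := cfc_mul h id Q hc.continuousOn continuousOn_id
    rw [cfc_id ℝ Q] at this
    exact this.symm
  have Qmul : ∀ h : ℝ → ℝ, Continuous h →
      Q * cfc h Q = cfc (fun t => t * h t) Q := by
    intro h hc
    have := cfc_mul id h Q continuousOn_id hc.continuousOn
    rw [cfc_id ℝ Q] at this
    exact this.symm
  have hcomm : ∀ (h : ℝ → ℝ), Continuous h → cfc h Q * Q = Q * cfc h Q := by
    intro h hc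
    rw [mulQ h hc, Qmul h hc]
    exact cfc_congr fun t _ => mul_comm _ _
  have hPP : P * P = P := by
    rw [hP, ← cfc_mul _ _ Q hgc.continuousOn hgc.continuousOn]
    refine cfc_congr fun t ht => ?_
    rcases hval t ht with ⟨h0, -⟩ | ⟨h0, -⟩ <;> simp [h0]
  have hΘQΘ : Θ * Q * Θ = P := by
    rw [hΘ, hP, mulQ f hfc,
      ← cfc_mul _ f Q (show ContinuousOn (fun t : ℝ => f t * t) (spectrum ℝ Q) from (hfc.mul continuous_id).continuousOn) hfc.continuousOn]
    refine cfc_congr fun t ht => ?_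
    rcases hval t ht with ⟨h0, hf0⟩ | ⟨h1, hf1⟩
    · simp [h0, hf0]
    · rw [h1]; nlinarith [hf1]
  have hΘΘQ : Θ * Θ * Q = P := by
    rw [hΘ, hP, ← cfc_mul f f Q hfc.continuousOn hfc.continuousOn,
      mulQ (fun t => f t * f t) (hfc.mul hfc)]
    refine cfc_congr fun t ht => ?_
    rcases hval t ht with ⟨h0, hf0⟩ | ⟨h1, hf1⟩
    · simp [h0, hf0]
    · rw [h1]; nlinarith [hf1]
  have hnorm : ‖Q - P‖ ≤ δ := by
    have hsub := cfc_sub id g Q continuousOn_id hgc.continuousOn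
    rw [cfc_id ℝ Q] at hsub
    rw [hP, ← hsub]
    refine norm_cfc_le hδ0 fun t ht => ?_
    rw [Real.norm_eq_abs, abs_le]
    rcases hmem t ht with h | h
    · have h0 := hg_zero t h
      constructor <;> simp [h0, id] <;> linarith [h.1, h.2]
    · have h1 := hg_one t h
      constructor <;> simp [h1, id] <;> linarith [h.1, h.2]
  exact ⟨Θ, P, hΘsa, hcomm f hfc, hPP, hPsa, hcomm g hgc, hΘQΘ, hΘΘQ, hnorm⟩
end

section
/- Let d, n ≥ 1, let ω : ℤ^d × ℤ^d → ℝ be additive in each variable and antisymmetric, and set λ(α, β) := exp(i·ω(α, β)). Let m, m' : ℤ^d → M_n(ℂ) have rapid decay, and define the ℤ^d×ℤ^d-indexed matrices S_{α,β} := λ(α, β)·m(α − β) and T_{α,β} := λ(α, β)·m'(α − β). Then for all α, β ∈ ℤ^d the family (S_{α,γ}·T_{γ,β})_{γ∈ℤ^d} is summable in M_n(ℂ); the function m'' : ℤ^d → M_n(ℂ) defined by m''(δ) := Σ_{γ∈ℤ^d} λ(γ, δ)·m(γ)·m'(δ − γ) has rapid decay; and Σ_{γ∈ℤ^d} S_{α,γ}·T_{γ,β}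 = λ(α, β)·m''(α − β) for all α, β ∈ ℤ^d. In particular the set of matrices of the form (λ(α,β)·m(α−β))_{α,β} with m of rapid decay is closed under matrix multiplication. -/
/-!
Writing `λ(α, β) = exp(i ω(α, β))`, additivity and antisymmetry of `ω` give the cocycle
identity `λ(α, α - γ) λ(α - γ, β) = λ(α, β) λ(γ, α - β)`, so after the substitution
`γ ↦ α - γ` the product series `∑_γ S_{αγ} T_{γβ}` is `λ(α, β)` times the twisted
convolution `m''(α - β)`. The terms of `m''(δ)` are bounded by `‖m γ‖ ‖m' (δ - γ)‖`, and Peetre's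
inequality `1 + ‖δ‖ ≤ (1 + ‖γ‖)(1 + ‖δ - γ‖)` turns decay of order `N + 2d` of `m` and `N`
of `m'` into the bound `C C' (1 + ‖δ‖)^{-N} (1 + ‖γ‖)^{-2d}`, which is summable over `ℤ^d`.
-/

open scoped Matrix.Norms.L2Operator

/-- `m : ℤ^d → M_n(ℂ)` has rapid decay (w.r.t. the operator norm on matrices). -/
def MagMatRapidDecay (d n : ℕ) (m : (Fin d → ℤ) → Matrix (Fin n) (Fin n) ℂ) : Prop :=
  ∀ N : ℕ, ∃ C : ℝ, 0 < C ∧ ∀ γ : Fin d → ℤ, ‖m γ‖ ≤ C / (1 + ‖γ‖) ^ N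

theorem summable_fin_pi_prod {α : Type*} {f : α → ℝ} (hf₀ : 0 ≤ f) (hf : Summable f) :
    ∀ d : ℕ, Summable fun x : Fin d → α => ∏ i, f (x i)
  | 0 => .of_finite
  | d + 1 => by
    refine (Fin.consEquiv fun _ => α).summable_iff.1 <|
      ((hf.mul_of_nonneg (summable_fin_pi_prod hf₀ hf d) hf₀ fun x =>
        Finset.prod_nonneg fun i _ => hf₀ (x i)).congr fun p => ?_)
    simp [Fin.prod_univ_succ, Fin.consEquiv]

theorem summable_int_inv_one_add_norm_sq : Summable fun k : ℤ => ((1 + ‖k‖) ^ 2)⁻¹ := by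
  refine (Real.summable_one_div_int_pow.2 one_lt_two).of_norm_bounded_eventually ?_
  filter_upwards [(Set.finite_singleton (0 : ℤ)).eventually_cofinite_notMem] with k hk
  have hk : (0 : ℝ) < ‖k‖ := norm_pos_iff.2 hk
  rw [Real.norm_of_nonneg (by positivity), one_div, ← sq_abs (k : ℝ), ← Int.norm_eq_abs]
  gcongr
  exact le_add_of_nonneg_left zero_le_one

theorem summable_inv_one_add_norm_pow_two_mul (d : ℕ) :
    Summable fun γ : Fin d → ℤ => ((1 + ‖γ‖) ^ (2 * d))⁻¹ := by
  refine (summable_fin_pi_prod (fun k => by positivity) summable_int_inv_one_add_norm_sq d)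
    |>.of_nonneg_of_le (fun γ => by positivity) fun γ => ?_
  rw [pow_mul, ← inv_pow, ← Fin.prod_const]
  gcongr with i
  exact norm_le_pi_norm γ i

section Weights

variable {E : Type*} [SeminormedAddCommGroup E]

theorem one_add_norm_le_mul_one_add_norm_sub (γ δ : E) :
    1 + ‖δ‖ ≤ (1 + ‖γ‖) * (1 + ‖δ - γ‖) := by
  have := norm_le_insert' δ γ
  nlinarith [norm_nonneg γ, norm_nonneg (δ - γ), mul_nonneg (norm_nonneg γ) (norm_nonneg (δ - γ))]

theorem inv_one_add_norm_pow_mul_le (N k : ℕ) (γ δ : E) :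
    ((1 + ‖γ‖) ^ (N + k))⁻¹ * ((1 + ‖δ - γ‖) ^ N)⁻¹ ≤ ((1 + ‖δ‖) ^ N)⁻¹ * ((1 + ‖γ‖) ^ k)⁻¹ := by
  rw [← mul_inv, ← mul_inv, pow_add, mul_right_comm, ← mul_pow]
  gcongr
  exact one_add_norm_le_mul_one_add_norm_sub γ δ

variable {A : Type*} [NormedRing A]

theorem norm_mul_sub_le_of_decay {a b : E → A} {C C' : ℝ} {N k : ℕ}
    (ha : ∀ γ, ‖a γ‖ ≤ C / (1 + ‖γ‖) ^ (N + k)) (hb : ∀ γ, ‖b γ‖ ≤ C' / (1 + ‖γ‖) ^ N)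
    (γ δ : E) :
    ‖a γ * b (δ - γ)‖ ≤ C * C' * (((1 + ‖δ‖) ^ N)⁻¹ * ((1 + ‖γ‖) ^ k)⁻¹) := by
  have hC : 0 ≤ C := by simpa using (norm_nonneg _).trans (ha 0)
  have hC' : 0 ≤ C' := by simpa using (norm_nonneg _).trans (hb 0)
  calc ‖a γ * b (δ - γ)‖ ≤ ‖a γ‖ * ‖b (δ - γ)‖ := norm_mul_le _ _
    _ ≤ C / (1 + ‖γ‖) ^ (N + k) * (C' / (1 + ‖δ - γ‖) ^ N) :=
      mul_le_mul (ha γ) (hb _) (norm_nonneg _) ((norm_nonneg _).trans (ha γ))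
    _ = C * C' * (((1 + ‖γ‖) ^ (N + k))⁻¹ * ((1 + ‖δ - γ‖) ^ N)⁻¹) := by ring
    _ ≤ _ := mul_le_mul_of_nonneg_left (inv_one_add_norm_pow_mul_le N k γ δ) (mul_nonneg hC hC')

end Weights

section Phase

variable {G : Type*} (ω : G → G → ℝ)

noncomputable def magneticPhase (α β : G) : ℂ := Complex.exp (Complex.I * ω α β)

theorem norm_magneticPhase_smul {A : Type*} [SeminormedAddCommGroup A] [NormedSpace ℂ A]
    (α β : G) (x : A) : ‖magneticPhase ω α β • x‖ = ‖x‖ := by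
  rw [norm_smul, magneticPhase, Complex.norm_exp_I_mul_ofReal, one_mul]

noncomputable def twistedConv [AddCommGroup G] {A : Type*} [Ring A] [Algebra ℂ A] [TopologicalSpace A]
    (m m' : G → A) (δ : G) : A :=
  ∑' γ, magneticPhase ω γ δ • (m γ * m' (δ - γ))

variable {ω} [AddCommGroup G] (hadd : ∀ a b c, ω (a + b) c = ω a c + ω b c)
  (hanti : ∀ a b, ω a b = -ω b a)
include hadd hanti

theorem magnetic_cocycle (α β γ : G) :
    ω α (α - γ) + ω (α - γ) β = ω α β + ω γ (α - β) := by
  have hsub : ∀ a b c, ω (a - b) c = ω a c - ω b c := fun a b c =>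
    map_sub (AddMonoidHom.mk' (ω · c) (hadd · · c)) a b
  rw [hanti α (α - γ), hanti γ (α - β), hsub, hsub, hsub]
  linarith [hanti α α, hanti γ α, hanti γ β]

theorem magneticPhase_mul_magneticPhase (α β γ : G) :
    magneticPhase ω α (α - γ) * magneticPhase ω (α - γ) β =
      magneticPhase ω α β * magneticPhase ω γ (α - β) := by
  simp only [magneticPhase, ← Complex.exp_add, ← mul_add, ← Complex.ofReal_add,
    magnetic_cocycle hadd hanti]

theorem magnetic_mul_comp_subLeft {A : Type*} [Ring A] [Algebra ℂ A] (m m' : G → A) (α β : G) :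
    (fun γ => (magneticPhase ω α γ • m (α - γ)) * (magneticPhase ω γ β • m' (γ - β))) ∘
        Equiv.subLeft α =
      fun γ => magneticPhase ω α β • (magneticPhase ω γ (α - β) • (m γ * m' (α - β - γ))) := by
  ext γ
  simp only [Function.comp, Equiv.subLeft_apply, sub_sub_cancel, sub_right_comm α γ β,
    smul_mul_smul_comm, smul_smul, magneticPhase_mul_magneticPhase hadd hanti]

variable {A : Type*} [NormedRing A] [NormedAlgebra ℂ A] (m m' : G → A) (α β : G)

theorem summable_magnetic_mul
    (h : Summable fun γ => magneticPhase ω γ (α - β) • (m γ * m' (α - β - γ))) :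
    Summable fun γ => (magneticPhase ω α γ • m (α - γ)) * (magneticPhase ω γ β • m' (γ - β)) := by
  rw [← (Equiv.subLeft α).summable_iff, magnetic_mul_comp_subLeft hadd hanti]
  exact h.const_smul _

theorem tsum_magnetic_mul :
    ∑' γ, (magneticPhase ω α γ • m (α - γ)) * (magneticPhase ω γ β • m' (γ - β)) =
      magneticPhase ω α β • twistedConv ω m m' (α - β) := by
  rw [← (Equiv.subLeft α).tsum_eq]
  exact (congrArg tsum (magnetic_mul_comp_subLeft hadd hanti m m' α β)).trans (tsum_const_smul'' _)

end Phase

section RapidDecay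

variable {d : ℕ} {A : Type*} [NormedRing A] [NormedAlgebra ℂ A]
  {ω : (Fin d → ℤ) → (Fin d → ℤ) → ℝ} {m m' : (Fin d → ℤ) → A} {C C' : ℝ} {N : ℕ}
  (hm : ∀ γ, ‖m γ‖ ≤ C / (1 + ‖γ‖) ^ (N + 2 * d)) (hm' : ∀ γ, ‖m' γ‖ ≤ C' / (1 + ‖γ‖) ^ N)
include hm hm'

theorem norm_twistedConv_term_le (δ γ : Fin d → ℤ) :
    ‖magneticPhase ω γ δ • (m γ * m' (δ - γ))‖ ≤
      C * C' * ((1 + ‖δ‖) ^ N)⁻¹ * ((1 + ‖γ‖) ^ (2 * d))⁻¹ := by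
  rw [norm_magneticPhase_smul, mul_assoc]
  exact norm_mul_sub_le_of_decay hm hm' γ δ

theorem summable_twistedConv_term [CompleteSpace A] (δ : Fin d → ℤ) :
    Summable fun γ => magneticPhase ω γ δ • (m γ * m' (δ - γ)) :=
  ((summable_inv_one_add_norm_pow_two_mul d).mul_left _).of_norm_bounded
    (norm_twistedConv_term_le hm hm' δ)

theorem norm_twistedConv_le (δ : Fin d → ℤ) :
    ‖twistedConv ω m m' δ‖ ≤
      C * C' * (∑' γ : Fin d → ℤ, ((1 + ‖γ‖) ^ (2 * d))⁻¹) / (1 + ‖δ‖) ^ N := by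
  refine (tsum_of_norm_bounded ((summable_inv_one_add_norm_pow_two_mul d).hasSum.mul_left _)
    (norm_twistedConv_term_le hm hm' δ)).trans_eq ?_
  ring

end RapidDecay

theorem MagMatRapidDecay.twistedConv {d n : ℕ} {ω : (Fin d → ℤ) → (Fin d → ℤ) → ℝ}
    {m m' : (Fin d → ℤ) → Matrix (Fin n) (Fin n) ℂ}
    (hm : MagMatRapidDecay d n m) (hm' : MagMatRapidDecay d n m') :
    MagMatRapidDecay d n (twistedConv ω m m') := by
  intro N
  obtain ⟨C, hC, hmC⟩ := hm (N + 2 * d)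
  obtain ⟨C', hC', hm'C⟩ := hm' N
  have hS : 1 ≤ ∑' γ : Fin d → ℤ, ((1 + ‖γ‖) ^ (2 * d))⁻¹ := by
    simpa using (summable_inv_one_add_norm_pow_two_mul d).le_tsum 0 fun _ _ => by positivity
  exact ⟨_, mul_pos (mul_pos hC hC') (zero_lt_one.trans_le hS), norm_twistedConv_le hmC hm'C⟩

theorem magnetic_matrices_closed_under_mul_general
    (d n : ℕ)
    (ω : (Fin d → ℤ) → (Fin d → ℤ) → ℝ)
    (hω_add_left : ∀ a b c : Fin d → ℤ, ω (a + b) c = ω a c + ω b c)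
    (hω_anti : ∀ a b : Fin d → ℤ, ω a b = - ω b a)
    (m m' : (Fin d → ℤ) → Matrix (Fin n) (Fin n) ℂ)
    (hm : MagMatRapidDecay d n m) (hm' : MagMatRapidDecay d n m') :
    (∀ α β : Fin d → ℤ,
      Summable (fun γ : Fin d → ℤ =>
        (Complex.exp (Complex.I * (ω α γ : ℝ)) • m (α - γ)) *
          (Complex.exp (Complex.I * (ω γ β : ℝ)) • m' (γ - β)))) ∧
    MagMatRapidDecay d n
      (fun δ : Fin d → ℤ =>
        ∑' γ : Fin d → ℤ, Complex.exp (Complex.I * (ω γ δ : ℝ)) • (m γ * m' (δ - γ))) ∧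
    (∀ α β : Fin d → ℤ,
      ∑' γ : Fin d → ℤ,
          (Complex.exp (Complex.I * (ω α γ : ℝ)) • m (α - γ)) *
            (Complex.exp (Complex.I * (ω γ β : ℝ)) • m' (γ - β))
        = Complex.exp (Complex.I * (ω α β : ℝ)) •
            (∑' γ : Fin d → ℤ,
              Complex.exp (Complex.I * (ω γ (α - β) : ℝ)) • (m γ * m' (α - β - γ)))) := by
  obtain ⟨C, -, hmC⟩ := hm (0 + 2 * d)
  obtain ⟨C', -, hm'C⟩ := hm' 0
  refine ⟨fun α β => ?_, hm.twistedConv hm', tsum_magnetic_mul hω_add_left hω_anti m m'⟩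
  exact summable_magnetic_mul hω_add_left hω_anti m m' α β
    (summable_twistedConv_term hmC hm'C (α - β))

/-- The magnetic matrices `(α,β) ↦ exp(i ω(α,β)) m(α−β)` with `m` of rapid decay
are closed under matrix multiplication, with an explicit magnetic-twisted
convolution formula for the product. -/
theorem magnetic_matrices_closed_under_mul
    (d n : ℕ) (hd : 1 ≤ d) (hn : 1 ≤ n)
    (ω : (Fin d → ℤ) → (Fin d → ℤ) → ℝ)
    (hω_add_left : ∀ a b c : Fin d → ℤ, ω (a + b) c = ω a c + ω b c)
    (hω_add_right : ∀ a b c : Fin d → ℤ, ω a (b + c) = ω a b + ω a c)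
    (hω_anti : ∀ a b : Fin d → ℤ, ω a b = - ω b a)
    (m m' : (Fin d → ℤ) → Matrix (Fin n) (Fin n) ℂ)
    (hm : MagMatRapidDecay d n m) (hm' : MagMatRapidDecay d n m') :
    (∀ α β : Fin d → ℤ,
      Summable (fun γ : Fin d → ℤ =>
        (Complex.exp (Complex.I * (ω α γ : ℝ)) • m (α - γ)) *
          (Complex.exp (Complex.I * (ω γ β : ℝ)) • m' (γ - β)))) ∧
    MagMatRapidDecay d n
      (fun δ : Fin d → ℤ =>
        ∑' γ : Fin d → ℤ, Complex.exp (Complex.I * (ω γ δ : ℝ)) • (m γ * m' (δ - γ))) ∧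
    (∀ α β : Fin d → ℤ,
      ∑' γ : Fin d → ℤ,
          (Complex.exp (Complex.I * (ω α γ : ℝ)) • m (α - γ)) *
            (Complex.exp (Complex.I * (ω γ β : ℝ)) • m' (γ - β))
        = Complex.exp (Complex.I * (ω α β : ℝ)) •
            (∑' γ : Fin d → ℤ,
              Complex.exp (Complex.I * (ω γ (α - β) : ℝ)) • (m γ * m' (α - β - γ)))) :=
  magnetic_matrices_closed_under_mul_general d n ω hω_add_left hω_anti m m' hm hm'
end
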